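/- arXiv:1607.05459 — 4 statements merged into one kernel-verified Lean document; each statement's English description precedes it below -/
import Mathlib

section
/- Let f : ℝ₊ᵏ → ℝ₊₊ᵏ be a standard interference function, let g : ℝ₊₊ᵏ → ℝ₊₊ be monotone and homogeneous of degree 1, and let θ > 0. Then the map ψ(x) := θ·f(x)/g(f(x)) is contractive (shrinking) on ℝ₊₊ᵏ with respect to the metric μ_s: for all x, y ∈ ℝ₊₊ᵏ with x ≠ y, μ_s(ψ(x), ψ(y)) < μ_s(x, y). -/
/-!
For positive vectors write `M(u, v) = maxᵢ log (uᵢ / vᵢ)`, so that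
`μ_s(x, y) = M(x, y)⁺ + M(y, x)⁺`. Monotonicity and homogeneity of `g` give
`log g(u) - log g(v) ≤ M(u, v)`; hence both one-sided terms of `μ_s(ψ x, ψ y)` are nonnegative
and the normalisation factors cancel: `μ_s(ψ x, ψ y) = M(f x, f y) + M(f y, f x)`, Hilbert's
projective distance between `f x` and `f y`. For `c > 0`, `x ≤ e^c y` gives
`f x ≤ f (e^c y) < e^c f y`, so `M(f x, f y) ≤ M(x, y)⁺` with strict inequality when
`M(x, y) > 0`, and `x ≠ y` forces `M(x, y) > 0` or `M(y, x) > 0`.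
-/

/-- The metric `μ_s(x, y) = max_i (log (x i / y i))⁺ + max_i (log (y i / x i))⁺`
on the positive orthant. -/
noncomputable def muS {k : ℕ} (x y : Fin k → ℝ) : ℝ :=
  (⨆ i : Fin k, max (Real.log (x i / y i)) 0) +
    (⨆ i : Fin k, max (Real.log (y i / x i)) 0)

open Real

noncomputable def logRatioSup {ι : Type*} (u v : ι → ℝ) : ℝ :=
  ⨆ i, log (u i / v i)

structure IsStandardInterference {ι : Type*} (f : (ι → ℝ) → ι → ℝ) : Prop where
  pos : ∀ x, (∀ i, 0 ≤ x i) → ∀ i, 0 < f x i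
  mono : ∀ x y, (∀ i, 0 ≤ x i) → x ≤ y → f x ≤ f y
  scale : ∀ α : ℝ, 1 < α → ∀ x, (∀ i, 0 ≤ x i) → ∀ i, f (α • x) i < α * f x i

theorem ciSup_max_zero {ι : Type*} [Finite ι] (a : ι → ℝ) :
    ⨆ i, max (a i) 0 = max (⨆ i, a i) 0 := by
  have := ciSup_sup_eq (f := a) (g := fun _ => 0) (Set.finite_range _).bddAbove
    (Set.finite_range _).bddAbove
  rwa [Real.iSup_const_zero] at this

section LogRatioSup

variable {ι : Type*} [Finite ι] {u v : ι → ℝ}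

theorem log_div_le_logRatioSup (i : ι) : log (u i / v i) ≤ logRatioSup u v :=
  le_ciSup (f := fun i => log (u i / v i)) (Set.finite_range _).bddAbove i

theorem le_exp_smul_of_logRatioSup_le (hu : ∀ i, 0 < u i) (hv : ∀ i, 0 < v i) {c : ℝ}
    (h : logRatioSup u v ≤ c) : u ≤ exp c • v := fun i => by
  have := (log_div_le_logRatioSup i).trans h
  rwa [log_le_iff_le_exp (div_pos (hu i) (hv i)), div_le_iff₀ (hv i)] at this

theorem logRatioSup_lt_of_forall_lt [Nonempty ι] (hu : ∀ i, 0 < u i) (hv : ∀ i, 0 < v i)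
    {c : ℝ} (h : ∀ i, u i < exp c * v i) : logRatioSup u v < c := by
  obtain ⟨j, hj⟩ := exists_eq_ciSup_of_finite (f := fun i => log (u i / v i))
  rw [logRatioSup, ← hj, log_lt_iff_lt_exp (div_pos (hu j) (hv j)), div_lt_iff₀ (hv j)]
  exact h j

theorem logRatioSup_smul_smul [Nonempty ι] (hu : ∀ i, 0 < u i) (hv : ∀ i, 0 < v i)
    {a b : ℝ} (ha : 0 < a) (hb : 0 < b) :
    logRatioSup (a • u) (b • v) = log a - log b + logRatioSup u v := by
  have hterm : ∀ i, log ((a • u) i / (b • v) i) = log a - log b + log (u i / v i) := fun i => by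
    rw [Pi.smul_apply, Pi.smul_apply, smul_eq_mul, smul_eq_mul, mul_div_mul_comm,
      log_mul (div_pos ha hb).ne' (div_pos (hu i) (hv i)).ne', log_div ha.ne' hb.ne']
  simp only [logRatioSup, hterm]
  exact ((OrderIso.addLeft (log a - log b)).map_ciSup (Set.finite_range _).bddAbove).symm

theorem logRatioSup_pos_or_of_ne (hu : ∀ i, 0 < u i) (hv : ∀ i, 0 < v i) (huv : u ≠ v) :
    0 < logRatioSup u v ∨ 0 < logRatioSup v u := by
  obtain ⟨i, hi⟩ := Function.ne_iff.mp huv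
  rcases hi.lt_or_gt with h | h
  · exact .inr ((log_pos ((one_lt_div (hu i)).2 h)).trans_le (log_div_le_logRatioSup i))
  · exact .inl ((log_pos ((one_lt_div (hv i)).2 h)).trans_le (log_div_le_logRatioSup i))

end LogRatioSup

theorem muS_eq_max_logRatioSup {k : ℕ} (x y : Fin k → ℝ) :
    muS x y = max (logRatioSup x y) 0 + max (logRatioSup y x) 0 := by
  simp only [muS, logRatioSup, ciSup_max_zero]

theorem log_sub_log_le_logRatioSup {ι : Type*} [Finite ι] {g : (ι → ℝ) → ℝ}
    (hgpos : ∀ x : ι → ℝ, (∀ i, 0 < x i) → 0 < g x)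
    (hgmono : ∀ x y : ι → ℝ, (∀ i, 0 < x i) → (∀ i, 0 < y i) → x ≤ y → g x ≤ g y)
    (hghom : ∀ α : ℝ, 0 < α → ∀ x : ι → ℝ, (∀ i, 0 < x i) → g (α • x) = α * g x)
    {u v : ι → ℝ} (hu : ∀ i, 0 < u i) (hv : ∀ i, 0 < v i) :
    log (g u) - log (g v) ≤ logRatioSup u v := by
  set c := logRatioSup u v
  have hcv : ∀ i, 0 < (exp c • v) i := fun i => mul_pos (exp_pos c) (hv i)
  have hle : g u ≤ exp c * g v :=
    (hgmono u _ hu hcv (le_exp_smul_of_logRatioSup_le hu hv le_rfl)).trans_eq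
      (hghom _ (exp_pos c) v hv)
  have := log_le_log (hgpos u hu) hle
  rw [log_mul (exp_pos c).ne' (hgpos v hv).ne', log_exp] at this
  linarith

theorem muS_normalize_eq {k : ℕ} [Nonempty (Fin k)] {g : (Fin k → ℝ) → ℝ}
    (hgpos : ∀ x : Fin k → ℝ, (∀ i, 0 < x i) → 0 < g x)
    (hgmono : ∀ x y : Fin k → ℝ, (∀ i, 0 < x i) → (∀ i, 0 < y i) → x ≤ y → g x ≤ g y)
    (hghom : ∀ α : ℝ, 0 < α → ∀ x : Fin k → ℝ, (∀ i, 0 < x i) → g (α • x) = α * g x)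
    {θ : ℝ} (hθ : 0 < θ) {u v : Fin k → ℝ} (hu : ∀ i, 0 < u i) (hv : ∀ i, 0 < v i) :
    muS ((θ / g u) • u) ((θ / g v) • v) = logRatioSup u v + logRatioSup v u := by
  have hgu := hgpos u hu
  have hgv := hgpos v hv
  rw [muS_eq_max_logRatioSup,
    logRatioSup_smul_smul hu hv (div_pos hθ hgu) (div_pos hθ hgv),
    logRatioSup_smul_smul hv hu (div_pos hθ hgv) (div_pos hθ hgu),
    log_div hθ.ne' hgu.ne', log_div hθ.ne' hgv.ne']
  have huv := log_sub_log_le_logRatioSup hgpos hgmono hghom hu hv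
  have hvu := log_sub_log_le_logRatioSup hgpos hgmono hghom hv hu
  rw [max_eq_left (by linarith), max_eq_left (by linarith)]
  ring

namespace IsStandardInterference

variable {ι : Type*} [Finite ι] [Nonempty ι] {f : (ι → ℝ) → ι → ℝ} {x y : ι → ℝ}

theorem logRatioSup_lt (hf : IsStandardInterference f) (hx : ∀ i, 0 < x i)
    (hy : ∀ i, 0 < y i) {c : ℝ} (hc : 0 < c) (h : logRatioSup x y ≤ c) :
    logRatioSup (f x) (f y) < c := by
  have hx₀ : ∀ i, 0 ≤ x i := fun i => (hx i).le
  have hy₀ : ∀ i, 0 ≤ y i := fun i => (hy i).le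
  refine logRatioSup_lt_of_forall_lt (hf.pos x hx₀) (hf.pos y hy₀) fun i => ?_
  calc f x i ≤ f (exp c • y) i := hf.mono x _ hx₀ (le_exp_smul_of_logRatioSup_le hx hy h) i
    _ < exp c * f y i := hf.scale _ (one_lt_exp_iff.2 hc) y hy₀ i

theorem logRatioSup_le_max (hf : IsStandardInterference f) (hx : ∀ i, 0 < x i)
    (hy : ∀ i, 0 < y i) : logRatioSup (f x) (f y) ≤ max (logRatioSup x y) 0 :=
  le_of_forall_gt_imp_ge_of_dense fun _ hc =>
    (hf.logRatioSup_lt hx hy ((le_max_right _ _).trans_lt hc) ((le_max_left _ _).trans hc.le)).le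

end IsStandardInterference

/-- If `f` is a standard interference function, `g : ℝ₊₊ᵏ → ℝ₊₊` is
monotone and homogeneous of degree 1, and `θ > 0`, then `ψ(x) = θ·f(x)/g(f(x))`
is contractive (shrinking) on the positive orthant with respect to `μ_s`. -/
theorem normalized_sif_contractive (k : ℕ) (f : (Fin k → ℝ) → (Fin k → ℝ))
    (hpos : ∀ x : Fin k → ℝ, (∀ i, 0 ≤ x i) → ∀ i, 0 < f x i)
    (hmono : ∀ x y : Fin k → ℝ, (∀ i, 0 ≤ x i) → x ≤ y → f x ≤ f y)
    (hscale : ∀ α : ℝ, 1 < α → ∀ x : Fin k → ℝ, (∀ i, 0 ≤ x i) →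
      ∀ i, f (α • x) i < α * f x i)
    (g : (Fin k → ℝ) → ℝ)
    (hgpos : ∀ x : Fin k → ℝ, (∀ i, 0 < x i) → 0 < g x)
    (hgmono : ∀ x y : Fin k → ℝ, (∀ i, 0 < x i) → (∀ i, 0 < y i) → x ≤ y → g x ≤ g y)
    (hghom : ∀ α : ℝ, 0 < α → ∀ x : Fin k → ℝ, (∀ i, 0 < x i) → g (α • x) = α * g x)
    (θ : ℝ) (hθ : 0 < θ) :
    ∀ x y : Fin k → ℝ, (∀ i, 0 < x i) → (∀ i, 0 < y i) → x ≠ y →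
      muS ((θ / g (f x)) • f x) ((θ / g (f y)) • f y) < muS x y := by
  intro x y hx hy hxy
  have hf : IsStandardInterference f := ⟨hpos, hmono, hscale⟩
  obtain ⟨i, -⟩ := Function.ne_iff.mp hxy
  have : Nonempty (Fin k) := ⟨i⟩
  rw [muS_normalize_eq hgpos hgmono hghom hθ (hpos x fun i => (hx i).le)
    (hpos y fun i => (hy i).le), muS_eq_max_logRatioSup]
  have hxy_le := hf.logRatioSup_le_max hx hy
  have hyx_le := hf.logRatioSup_le_max hy hx
  rcases logRatioSup_pos_or_of_ne hx hy hxy with h | h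
  · have := hf.logRatioSup_lt hx hy h le_rfl
    linarith [max_eq_left h.le]
  · have := hf.logRatioSup_lt hy hx h le_rfl
    linarith [max_eq_left h.le]
end

section
/- Fix p' ∈ ℝ₊₊^{2K} and let g_{p'}(w) := max{g₁(w), g_{2,p'}(w)}. Let w' ∈ ℝ₊₊^{2K} be the unique vector satisfying w' = λ'·f_{p'}(w') with g_{p'}(w') = 1, where λ' := 1/g_{p'}(f_{p'}(w')). Then λ' is the maximum feasible utility: there exist no λ'' > λ' and w'' ∈ ℝ₊^{2K} satisfying both w'' ≥ λ''·f_{p'}(w'') componentwise and g_{p'}(w'') ≤ 1. -/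
/-!
Both `f_{p'}` and `g_{p'}` are positive and monotone; `g_{p'}` is positively homogeneous and
`f_{p'}` is weakly scalable, `f(t w) ≤ t f(w)` for `t ≥ 1`, because the interference is affine
in `w` with a nonnegative constant term and `log₂(1 + x) ≤ t log₂(1 + x / t)` (Bernoulli).
Given a competitor `(λ'', w'')`, let `t` be the least scalar with `w' ≤ t w''`. Then
`1 = g(w') ≤ t g(w'') ≤ t`, and at an index `l` where the bound is tight,
`w'_l = λ' f_l(w') ≤ λ' f_l(t w'') ≤ λ' t f_l(w'') < λ'' t f_l(w'') ≤ t w''_l = w'_l`.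
-/

/-- Interference at link `l`: `I_l(p, w) = ((Ṽ · diag(p) · w)_l + σ²) / v_l`. -/
noncomputable def interf {K : ℕ} (V : Matrix (Fin (2 * K)) (Fin (2 * K)) ℝ)
    (v : Fin (2 * K) → ℝ) (σ2 : ℝ) (p w : Fin (2 * K) → ℝ) (l : Fin (2 * K)) : ℝ :=
  ((∑ j, V l j * (p j * w j)) + σ2) / v l

/-- `f_l(p, w) = d_l / (W₀ B log₂(1 + SINR_l(p, w)))` with `SINR_l = p_l / I_l(p, w)`. -/
noncomputable def rateF {K : ℕ} (V : Matrix (Fin (2 * K)) (Fin (2 * K)) ℝ)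
    (v : Fin (2 * K) → ℝ) (σ2 W0 B : ℝ) (d : Fin (2 * K) → ℝ)
    (p w : Fin (2 * K) → ℝ) (l : Fin (2 * K)) : ℝ :=
  d l / (W0 * B * Real.logb 2 (1 + p l / interf V v σ2 p w l))

/-- Load constraint `g₁(w) = ‖A w‖_∞`, where the 0/1 association matrix `A` with
exactly one 1 per column is encoded by the assignment map `asg` (link `l` is
associated to cell `asg l`). -/
noncomputable def gOne {K N : ℕ} (asg : Fin (2 * K) → Fin N) (w : Fin (2 * K) → ℝ) : ℝ :=
  ⨆ n : Fin N, ∑ l, if asg l = n then w l else 0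

/-- Power constraint `g₂(w, p) = W₀ · max_j (A^{ext} diag(w) p)_j / p^{max}_j`, with
the 0/1 matrix `A^{ext}` (one 1 per column) encoded by the assignment map `aext`. -/
noncomputable def gTwo {K N : ℕ} (aext : Fin (2 * K) → Fin (K + N))
    (pmax : Fin (K + N) → ℝ) (W0 : ℝ) (w p : Fin (2 * K) → ℝ) : ℝ :=
  W0 * ⨆ j : Fin (K + N), (∑ l, if aext l = j then w l * p l else 0) / pmax j

open Finset

theorem Real.logb_one_add_le_mul_logb_one_add_div {b x t : ℝ} (hb : 1 < b) (hx : -1 < x)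
    (ht : 1 ≤ t) : Real.logb b (1 + x) ≤ t * Real.logb b (1 + x / t) := by
  have ht0 : 0 < t := one_pos.trans_le ht
  have hxt : -1 < x / t := (lt_div_iff₀ ht0).2 (by linarith)
  have bernoulli : 1 + x ≤ (1 + x / t) ^ t := by
    simpa [mul_div_cancel₀ x ht0.ne'] using one_add_mul_self_le_rpow_one_add hxt.le ht
  calc Real.logb b (1 + x) ≤ Real.logb b ((1 + x / t) ^ t) :=
        Real.logb_le_logb_of_le hb (by linarith) bernoulli
    _ = t * Real.logb b (1 + x / t) := Real.logb_rpow_eq_mul_logb_of_pos (by linarith)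

theorem exists_le_smul_and_eq {ι : Type*} [Fintype ι] [Nonempty ι] (w u : ι → ℝ)
    (hu : ∀ i, 0 < u i) : ∃ t : ℝ, ∃ l, w ≤ t • u ∧ w l = t * u l := by
  obtain ⟨l, -, hl⟩ := exists_max_image univ (fun i => w i / u i) univ_nonempty
  refine ⟨w l / u l, l, fun i => ?_, (div_mul_cancel₀ _ (hu l).ne').symm⟩
  exact (div_le_iff₀ (hu i)).1 (hl i (mem_univ i))

/-- Yates' standard interference mappings, with scalability in the weak form
`F (t • w) ≤ t • F w`. -/
structure IsWeakStandard {ι : Type*} (F : (ι → ℝ) → ι → ℝ) : Prop where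
  pos : ∀ w, 0 ≤ w → ∀ l, 0 < F w l
  mono : ∀ w₁ w₂, 0 ≤ w₁ → w₁ ≤ w₂ → F w₁ ≤ F w₂
  scalable : ∀ t : ℝ, 1 ≤ t → ∀ w, 0 ≤ w → F (t • w) ≤ t • F w

theorem IsWeakStandard.le_of_eq_smul {ι : Type*} [Fintype ι] [Nonempty ι]
    {F : (ι → ℝ) → ι → ℝ} (hF : IsWeakStandard F) {g : (ι → ℝ) → ℝ} (hg : Monotone g)
    (hg_smul : ∀ t : ℝ, 0 ≤ t → ∀ w, g (t • w) = t * g w)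
    {w' w'' : ι → ℝ} {μ' μ'' : ℝ} (hw' : ∀ i, 0 < w' i) (hfix : w' = μ' • F w')
    (hgw' : g w' = 1) (hw''0 : 0 ≤ w'') (hsub : μ'' • F w'' ≤ w'') (hgw'' : g w'' ≤ 1) :
    μ'' ≤ μ' := by
  by_contra! hlt
  have hw'0 : 0 ≤ w' := fun i => (hw' i).le
  have hμ' : 0 < μ' := by
    obtain ⟨i⟩ := ‹Nonempty ι›
    have h := hw' i
    rw [congrFun hfix i] at h
    exact pos_of_mul_pos_left h (hF.pos w' hw'0 i).le
  have hw'' : ∀ i, 0 < w'' i := fun i =>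
    (mul_pos (hμ'.trans hlt) (hF.pos w'' hw''0 i)).trans_le (hsub i)
  obtain ⟨t, l, hle, heq⟩ := exists_le_smul_and_eq w' w'' hw''
  have ht0 : 0 < t := pos_of_mul_pos_left (heq ▸ hw' l) (hw'' l).le
  have ht1 : 1 ≤ t := calc
    1 = g w' := hgw'.symm
    _ ≤ g (t • w'') := hg hle
    _ = t * g w'' := hg_smul t ht0.le w''
    _ ≤ t := mul_le_of_le_one_right ht0.le hgw''
  have hFw'' := hF.pos w'' hw''0 l
  have := calc
    w' l = μ' * F w' l := congrFun hfix l
    _ ≤ μ' * F (t • w'') l := by gcongr; exact hF.mono _ _ hw'0 hle l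
    _ ≤ μ' * (t * F w'' l) := by gcongr; exact hF.scalable t ht1 w'' hw''0 l
    _ < μ'' * (t * F w'' l) := by gcongr
    _ = t * (μ'' * F w'' l) := by ring
    _ ≤ t * w'' l := by gcongr; exact hsub l
  exact this.ne heq

section Rate

variable {K : ℕ} {V : Matrix (Fin (2 * K)) (Fin (2 * K)) ℝ} {v : Fin (2 * K) → ℝ} {σ2 : ℝ}
  {p : Fin (2 * K) → ℝ}

theorem interf_pos (hV : ∀ i j, 0 ≤ V i j) (hv : ∀ i, 0 < v i) (hσ2 : 0 < σ2)
    (hp : ∀ i, 0 ≤ p i) {w : Fin (2 * K) → ℝ} (hw : 0 ≤ w) (l : Fin (2 * K)) :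
    0 < interf V v σ2 p w l := by
  have : 0 ≤ ∑ j, V l j * (p j * w j) :=
    sum_nonneg fun j _ => mul_nonneg (hV l j) (mul_nonneg (hp j) (hw j))
  exact div_pos (by linarith) (hv l)

theorem interf_mono (hV : ∀ i j, 0 ≤ V i j) (hv : ∀ i, 0 ≤ v i) (hp : ∀ i, 0 ≤ p i)
    {w₁ w₂ : Fin (2 * K) → ℝ} (hw : w₁ ≤ w₂) (l : Fin (2 * K)) :
    interf V v σ2 p w₁ l ≤ interf V v σ2 p w₂ l := by
  unfold interf
  gcongr with j
  · exact hv l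
  · exact hV l j
  · exact hp j
  · exact hw j

theorem interf_smul_le (hv : ∀ i, 0 ≤ v i) (hσ2 : 0 ≤ σ2) {t : ℝ} (ht : 1 ≤ t)
    (w : Fin (2 * K) → ℝ) (l : Fin (2 * K)) :
    interf V v σ2 p (t • w) l ≤ t * interf V v σ2 p w l := by
  have hsum : ∑ j, V l j * (p j * (t • w) j) = t * ∑ j, V l j * (p j * w j) := by
    rw [mul_sum]
    exact sum_congr rfl fun j _ => by simp only [Pi.smul_apply, smul_eq_mul]; ring
  rw [interf, interf, hsum, ← mul_div_assoc]
  exact div_le_div_of_nonneg_right (by nlinarith) (hv l)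

end Rate

/-- `rateF V v σ2 W0 B d p w l` is by definition
`bandwidthDemand (W0 * B) (d l) (p l) (interf V v σ2 p w l)`. -/
noncomputable def bandwidthDemand (c d p I : ℝ) : ℝ :=
  d / (c * Real.logb 2 (1 + p / I))

section BandwidthDemand

variable {c d p : ℝ}

theorem logb_one_add_div_pos (hp : 0 < p) {I : ℝ} (hI : 0 < I) :
    0 < Real.logb 2 (1 + p / I) :=
  Real.logb_pos one_lt_two (by linarith [div_pos hp hI])

theorem bandwidthDemand_pos (hc : 0 < c) (hd : 0 < d) (hp : 0 < p) {I : ℝ} (hI : 0 < I) :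
    0 < bandwidthDemand c d p I :=
  div_pos hd (mul_pos hc (logb_one_add_div_pos hp hI))

theorem monotoneOn_bandwidthDemand (hc : 0 < c) (hd : 0 ≤ d) (hp : 0 < p) :
    MonotoneOn (bandwidthDemand c d p) (Set.Ioi 0) := by
  intro I₁ hI₁ I₂ hI₂ hI
  refine div_le_div_of_nonneg_left hd (mul_pos hc (logb_one_add_div_pos hp hI₂)) ?_
  have hpI₂ : 0 < p / I₂ := div_pos hp hI₂
  gcongr
  exact one_lt_two

theorem bandwidthDemand_mul_le (hc : 0 < c) (hd : 0 ≤ d) (hp : 0 < p) {I t : ℝ} (hI : 0 < I)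
    (ht : 1 ≤ t) : bandwidthDemand c d p (t * I) ≤ t * bandwidthDemand c d p I := by
  have ht0 : 0 < t := one_pos.trans_le ht
  have hconcave : Real.logb 2 (1 + p / I) ≤ t * Real.logb 2 (1 + p / (t * I)) := by
    rw [mul_comm t I, ← div_div]
    exact Real.logb_one_add_le_mul_logb_one_add_div one_lt_two
      (by linarith [div_pos hp hI]) ht
  have hL := logb_one_add_div_pos hp hI
  have hLt := logb_one_add_div_pos hp (mul_pos ht0 hI)
  unfold bandwidthDemand
  rw [mul_div_assoc', div_le_div_iff₀ (by positivity) (by positivity)]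
  calc d * (c * Real.logb 2 (1 + p / I))
      ≤ d * (c * (t * Real.logb 2 (1 + p / (t * I)))) := by gcongr
    _ = t * d * (c * Real.logb 2 (1 + p / (t * I))) := by ring

end BandwidthDemand

theorem rateF_isWeakStandard {K : ℕ} {V : Matrix (Fin (2 * K)) (Fin (2 * K)) ℝ}
    {v : Fin (2 * K) → ℝ} {σ2 W0 B : ℝ} {d p : Fin (2 * K) → ℝ}
    (hV : ∀ i j, 0 ≤ V i j) (hv : ∀ i, 0 < v i) (hσ2 : 0 < σ2) (hW0 : 0 < W0) (hB : 0 < B)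
    (hd : ∀ i, 0 < d i) (hp : ∀ i, 0 < p i) :
    IsWeakStandard (rateF V v σ2 W0 B d p) := by
  have hc : 0 < W0 * B := mul_pos hW0 hB
  have hp0 : ∀ i, 0 ≤ p i := fun i => (hp i).le
  have hv0 : ∀ i, 0 ≤ v i := fun i => (hv i).le
  have hI {w} (hw : 0 ≤ w) l := interf_pos hV hv hσ2 hp0 (w := w) hw l
  refine ⟨fun w hw l => bandwidthDemand_pos hc (hd l) (hp l) (hI hw l),
    fun w₁ w₂ hw₁ hw l => ?_, fun t ht w hw l => ?_⟩
  · exact monotoneOn_bandwidthDemand hc (hd l).le (hp l) (hI hw₁ l)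
      (hI (hw₁.trans hw) l) (interf_mono hV hv0 hp0 hw l)
  · have hI_t : 0 < interf V v σ2 p (t • w) l := hI (smul_nonneg (by linarith) hw) l
    calc bandwidthDemand (W0 * B) (d l) (p l) (interf V v σ2 p (t • w) l)
        ≤ bandwidthDemand (W0 * B) (d l) (p l) (t * interf V v σ2 p w l) :=
          monotoneOn_bandwidthDemand hc (hd l).le (hp l) hI_t
            (mul_pos (by linarith) (hI hw l)) (interf_smul_le hv0 hσ2.le ht w l)
      _ ≤ t * bandwidthDemand (W0 * B) (d l) (p l) (interf V v σ2 p w l) :=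
          bandwidthDemand_mul_le hc (hd l).le (hp l) (hI hw l) ht

section Constraints

variable {K N : ℕ}

theorem gOne_mono (asg : Fin (2 * K) → Fin N) : Monotone (gOne asg) := fun _ _ hw =>
  ciSup_mono (Set.finite_range _).bddAbove fun _ =>
    sum_le_sum fun l _ => by split_ifs <;> simp [hw l]

theorem gOne_smul (asg : Fin (2 * K) → Fin N) {t : ℝ} (ht : 0 ≤ t) (w : Fin (2 * K) → ℝ) :
    gOne asg (t • w) = t * gOne asg w := by
  simp only [gOne, Real.mul_iSup_of_nonneg ht, mul_sum, Pi.smul_apply, smul_eq_mul, mul_ite,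
    mul_zero]

theorem gTwo_mono (aext : Fin (2 * K) → Fin (K + N)) {pmax : Fin (K + N) → ℝ}
    (hpmax : ∀ j, 0 < pmax j) {W0 : ℝ} (hW0 : 0 ≤ W0) {p : Fin (2 * K) → ℝ}
    (hp : ∀ i, 0 ≤ p i) : Monotone fun w => gTwo aext pmax W0 w p := fun _ _ hw => by
  refine mul_le_mul_of_nonneg_left
    (ciSup_mono (Set.finite_range _).bddAbove fun j => ?_) hW0
  gcongr with l
  · exact (hpmax j).le
  · split_ifs
    · exact mul_le_mul_of_nonneg_right (hw l) (hp l)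
    · rfl

theorem gTwo_smul (aext : Fin (2 * K) → Fin (K + N)) (pmax : Fin (K + N) → ℝ) (W0 : ℝ)
    {t : ℝ} (ht : 0 ≤ t) (w p : Fin (2 * K) → ℝ) :
    gTwo aext pmax W0 (t • w) p = t * gTwo aext pmax W0 w p := by
  simp only [gTwo, mul_left_comm t W0, Real.mul_iSup_of_nonneg ht, mul_div_assoc', mul_sum,
    Pi.smul_apply, smul_eq_mul, mul_ite, mul_zero, mul_assoc]

end Constraints

theorem bandwidth_fixed_point_optimal_general (K N : ℕ) (hK : 1 ≤ K)
    (V : Matrix (Fin (2 * K)) (Fin (2 * K)) ℝ) (hV : ∀ i j, 0 ≤ V i j)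
    (v : Fin (2 * K) → ℝ) (hv : ∀ i, 0 < v i)
    (σ2 : ℝ) (hσ2 : 0 < σ2) (W0 B : ℝ) (hW0 : 0 < W0) (hB : 0 < B)
    (d : Fin (2 * K) → ℝ) (hd : ∀ i, 0 < d i)
    (asg : Fin (2 * K) → Fin N) (aext : Fin (2 * K) → Fin (K + N))
    (pmax : Fin (K + N) → ℝ) (hpmax : ∀ j, 0 < pmax j)
    (p' : Fin (2 * K) → ℝ) (hp' : ∀ i, 0 < p' i)
    (w' : Fin (2 * K) → ℝ) (hw' : ∀ i, 0 < w' i) (lam' : ℝ)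
    (hfix : ∀ l, w' l = lam' * rateF V v σ2 W0 B d p' w' l)
    (hunit : max (gOne asg w') (gTwo aext pmax W0 w' p') = 1) :
    ¬ ∃ lam'' : ℝ, lam' < lam'' ∧ ∃ w'' : Fin (2 * K) → ℝ,
      (∀ i, 0 ≤ w'' i) ∧
      (∀ l, lam'' * rateF V v σ2 W0 B d p' w'' l ≤ w'' l) ∧
      max (gOne asg w'') (gTwo aext pmax W0 w'' p') ≤ 1 := by
  rintro ⟨lam'', hlt, w'', hw'', hsub, hgw''⟩
  have : Nonempty (Fin (2 * K)) := ⟨⟨0, by omega⟩⟩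
  have hg_mono : Monotone fun w => max (gOne asg w) (gTwo aext pmax W0 w p') :=
    (gOne_mono asg).max (gTwo_mono aext hpmax hW0.le fun i => (hp' i).le)
  have hg_smul (t : ℝ) (ht : 0 ≤ t) (w : Fin (2 * K) → ℝ) :
      max (gOne asg (t • w)) (gTwo aext pmax W0 (t • w) p') =
        t * max (gOne asg w) (gTwo aext pmax W0 w p') := by
    rw [gOne_smul asg ht, gTwo_smul aext pmax W0 ht, mul_max_of_nonneg _ _ ht]
  exact hlt.not_ge <| (rateF_isWeakStandard hV hv hσ2 hW0 hB hd hp').le_of_eq_smul hg_mono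
    hg_smul hw' (funext hfix) hunit hw'' hsub hgw''

/-- Proposition 1, optimality part: the normalized fixed point `w'`
of `f_{p'}` attains the maximum feasible utility: no `λ'' > λ'` admits a nonnegative
`w''` with `w'' ≥ λ''·f_{p'}(w'')` and `g_{p'}(w'') ≤ 1`. -/
theorem bandwidth_fixed_point_optimal (K N : ℕ) (hK : 1 ≤ K) (hN : 1 ≤ N)
    (V : Matrix (Fin (2 * K)) (Fin (2 * K)) ℝ) (hV : ∀ i j, 0 ≤ V i j)
    (v : Fin (2 * K) → ℝ) (hv : ∀ i, 0 < v i)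
    (σ2 : ℝ) (hσ2 : 0 < σ2) (W0 B : ℝ) (hW0 : 0 < W0) (hB : 0 < B)
    (d : Fin (2 * K) → ℝ) (hd : ∀ i, 0 < d i)
    (asg : Fin (2 * K) → Fin N) (aext : Fin (2 * K) → Fin (K + N))
    (pmax : Fin (K + N) → ℝ) (hpmax : ∀ j, 0 < pmax j)
    (p' : Fin (2 * K) → ℝ) (hp' : ∀ i, 0 < p' i)
    (w' : Fin (2 * K) → ℝ) (hw' : ∀ i, 0 < w' i) (lam' : ℝ)
    (hlam' : lam' = 1 / max (gOne asg (fun l => rateF V v σ2 W0 B d p' w' l))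
      (gTwo aext pmax W0 (fun l => rateF V v σ2 W0 B d p' w' l) p'))
    (hfix : ∀ l, w' l = lam' * rateF V v σ2 W0 B d p' w' l)
    (hunit : max (gOne asg w') (gTwo aext pmax W0 w' p') = 1) :
    ¬ ∃ lam'' : ℝ, lam' < lam'' ∧ ∃ w'' : Fin (2 * K) → ℝ,
      (∀ i, 0 ≤ w'' i) ∧
      (∀ l, lam'' * rateF V v σ2 W0 B d p' w'' l ≤ w'' l) ∧
      max (gOne asg w'') (gTwo aext pmax W0 w'' p') ≤ 1 :=
  bandwidth_fixed_point_optimal_general K N hK V hV v hv σ2 hσ2 W0 B hW0 hB d hd asg aext pmax hpmax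
    p' hp' w' hw' lam' hfix hunit
end

section
/- Fix p' ∈ ℝ₊₊^{2K}, let w' ∈ ℝ₊₊^{2K} be the unique vector satisfying w' = λ'·f_{p'}(w') with max{g₁(w'), g_{2,p'}(w')} = 1 and λ' := 1/max{g₁(f_{p'}(w')), g_{2,p'}(f_{p'}(w'))}, and let p'' ∈ ℝ₊₊^{2K} be the unique vector satisfying p'' = λ''·f'_{w'}(p'') with g_{2,w'}(p'') = 1 and λ'' := 1/g_{2,w'}(f'_{w'}(p'')). Then: (i) if g_{2,p'}(w') = 1, then λ'' = λ' and p'' = p'; (ii) if g_{2,p'}(w') < 1, then λ'' > λ'. -/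
/-- Interference at link `l` for a fixed bandwidth vector `w'`:
`I_l(p) = ((Ṽ · diag(w') · p)_l + σ²) / v_l`. -/
noncomputable def interfW {K : ℕ} (V : Matrix (Fin (2 * K)) (Fin (2 * K)) ℝ)
    (v : Fin (2 * K) → ℝ) (σ2 : ℝ) (w' p : Fin (2 * K) → ℝ) (l : Fin (2 * K)) : ℝ :=
  ((∑ j, V l j * (w' j * p j)) + σ2) / v l

/-- The function `f'_{w'}` of the paper, defined componentwise by
`(p_l / w'_l) · d_l / (W₀ B log₂(1 + p_l / I_l(p)))` when `p_l ≠ 0`, and by the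
continuous extension `(d_l ln 2 / (W₀ B w'_l)) · I_l(p)` when `p_l = 0`. -/
noncomputable def fPrimeW {K : ℕ} (V : Matrix (Fin (2 * K)) (Fin (2 * K)) ℝ)
    (v : Fin (2 * K) → ℝ) (σ2 W0 B : ℝ) (d : Fin (2 * K) → ℝ)
    (w' p : Fin (2 * K) → ℝ) (l : Fin (2 * K)) : ℝ :=
  if p l = 0 then
    d l * Real.log 2 / (W0 * B * w' l) * interfW V v σ2 w' p l
  else
    p l / w' l * (d l / (W0 * B * Real.logb 2 (1 + p l / interfW V v σ2 w' p l)))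


/-!
At a positive fixed point `p = λ f'_w(p)` each link equation can be solved for the scale:
`λ = W₀ B w_l log₂(1 + SINR_l(p)) / d_l`, and `w' = λ' f_{p'}(w')` gives the same formula for
`λ'` with `p = p'`; so `λ'` and `λ''` are both read off from SINRs under the bandwidths `w'`.
If `p'' ≤ t p'` with equality at link `l` and `t ≥ 1`, the affine interference satisfies
`I_l(p'') ≤ t I_l(p') - (t - 1) σ² / v_l`, hence `SINR_l(p'') ≥ SINR_l(p')` and `λ'' ≥ λ'`,
strictly when `t > 1` because `σ² > 0`. Homogeneity of `g₂` in `p` together with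
`g₂(w', p'') = 1` forces `t g₂(w', p') ≥ 1`, so `t > 1` when `g₂(w', p') < 1`. When
`g₂(w', p') = 1` the same holds for the reverse ratio `s`, and `t, s ≥ 1` with the strict
comparisons leaves only `t = s = 1`, i.e. `p'' = p'`.
-/

section Interference

variable {K : ℕ} {V : Matrix (Fin (2 * K)) (Fin (2 * K)) ℝ} {v : Fin (2 * K) → ℝ} {σ2 : ℝ}
  {w p q r : Fin (2 * K) → ℝ} {t : ℝ} {l : Fin (2 * K)}

lemma interf_eq_interfW : interf V v σ2 p w = interfW V v σ2 w p := by
  ext l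
  simp only [interf, interfW, mul_comm (p _)]

lemma interfW_pos (hV : ∀ i j, 0 ≤ V i j) (hv : 0 < v l) (hσ2 : 0 < σ2) (hw : 0 ≤ w)
    (hp : 0 ≤ p) : 0 < interfW V v σ2 w p l := by
  unfold interfW
  have : 0 ≤ ∑ j, V l j * (w j * p j) :=
    Finset.sum_nonneg fun j _ => mul_nonneg (hV l j) (mul_nonneg (hw j) (hp j))
  positivity

lemma interfW_mono (hV : ∀ i j, 0 ≤ V i j) (hv : 0 ≤ v l) (hw : 0 ≤ w) (hpq : p ≤ q) :
    interfW V v σ2 w p l ≤ interfW V v σ2 w q l := by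
  unfold interfW
  gcongr with j
  · exact hV l j
  · exact hw j
  · exact hpq j

variable (V v σ2 w q t l) in
lemma interfW_smul_add :
    interfW V v σ2 w (t • q) l + (t - 1) * (σ2 / v l) = t * interfW V v σ2 w q l := by
  simp only [interfW, Pi.smul_apply, smul_eq_mul, mul_left_comm (w _), ← mul_assoc (V l _) t,
    mul_comm (V l _) t, mul_assoc t, ← Finset.mul_sum]
  ring

lemma interfW_le_smul (hV : ∀ i j, 0 ≤ V i j) (hv : 0 < v l) (hσ2 : 0 ≤ σ2) (hw : 0 ≤ w)
    (ht : 1 ≤ t) (h : r ≤ t • q) : interfW V v σ2 w r l ≤ t * interfW V v σ2 w q l := by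
  have := interfW_smul_add V v σ2 w q t l
  have := interfW_mono (σ2 := σ2) hV hv.le hw h
  have : 0 ≤ (t - 1) * (σ2 / v l) := by have := sub_nonneg.2 ht; positivity
  linarith

lemma interfW_lt_smul (hV : ∀ i j, 0 ≤ V i j) (hv : 0 < v l) (hσ2 : 0 < σ2) (hw : 0 ≤ w)
    (ht : 1 < t) (h : r ≤ t • q) : interfW V v σ2 w r l < t * interfW V v σ2 w q l := by
  have := interfW_smul_add V v σ2 w q t l
  have := interfW_mono (σ2 := σ2) hV hv.le hw h
  have : 0 < (t - 1) * (σ2 / v l) := by have := sub_pos.2 ht; positivity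
  linarith

lemma sinr_le_of_le_smul (hV : ∀ i j, 0 ≤ V i j) (hv : 0 < v l) (hσ2 : 0 < σ2) (hw : 0 ≤ w)
    (hr : 0 ≤ r) (ht : 1 ≤ t) (h : r ≤ t • q) (hl : r l = t * q l) :
    q l / interfW V v σ2 w q l ≤ r l / interfW V v σ2 w r l :=
  calc q l / interfW V v σ2 w q l = r l / (t * interfW V v σ2 w q l) := by
        rw [hl, mul_div_mul_left _ _ (by positivity)]
    _ ≤ r l / interfW V v σ2 w r l :=
        div_le_div_of_nonneg_left (hr l) (interfW_pos hV hv hσ2 hw hr)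
          (interfW_le_smul hV hv hσ2.le hw ht h)

lemma sinr_lt_of_le_smul (hV : ∀ i j, 0 ≤ V i j) (hv : 0 < v l) (hσ2 : 0 < σ2) (hw : 0 ≤ w)
    (hr : 0 ≤ r) (hq : 0 < q l) (ht : 1 < t) (h : r ≤ t • q) (hl : r l = t * q l) :
    q l / interfW V v σ2 w q l < r l / interfW V v σ2 w r l :=
  calc q l / interfW V v σ2 w q l = r l / (t * interfW V v σ2 w q l) := by
        rw [hl, mul_div_mul_left _ _ (by positivity)]
    _ < r l / interfW V v σ2 w r l :=
        div_lt_div_of_pos_left (by rw [hl]; positivity) (interfW_pos hV hv hσ2 hw hr)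
          (interfW_lt_smul hV hv hσ2 hw ht h)

end Interference

/-- The scale `λ` that any fixed point `p = λ f'_w(p)`, or `w = λ f_p(w)`, must have, solved
from the equation at link `l`. -/
noncomputable def utilityAt {K : ℕ} (V : Matrix (Fin (2 * K)) (Fin (2 * K)) ℝ)
    (v : Fin (2 * K) → ℝ) (σ2 W0 B : ℝ) (d : Fin (2 * K) → ℝ)
    (w p : Fin (2 * K) → ℝ) (l : Fin (2 * K)) : ℝ :=
  W0 * B * w l * Real.logb 2 (1 + p l / interfW V v σ2 w p l) / d l

section Utility

variable {K : ℕ} {V : Matrix (Fin (2 * K)) (Fin (2 * K)) ℝ} {v : Fin (2 * K) → ℝ}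
  {σ2 W0 B : ℝ} {d w p q r : Fin (2 * K) → ℝ} {t lam : ℝ} {l : Fin (2 * K)}

lemma eq_utilityAt_of_rateF (hw : w l ≠ 0) (h : w l = lam * rateF V v σ2 W0 B d p w l) :
    lam = utilityAt V v σ2 W0 B d w p l := by
  rw [rateF, interf_eq_interfW] at h
  rw [utilityAt]
  set L := Real.logb 2 (1 + p l / interfW V v σ2 w p l)
  obtain ⟨hd, hW0, hB, hL⟩ : d l ≠ 0 ∧ W0 ≠ 0 ∧ B ≠ 0 ∧ L ≠ 0 := by
    refine ⟨?_, ?_, ?_, ?_⟩ <;> rintro h0 <;> simp [h0] at h <;> exact hw h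
  rw [h]
  field_simp

lemma eq_utilityAt_of_fPrimeW (hp : p l ≠ 0) (h : p l = lam * fPrimeW V v σ2 W0 B d w p l) :
    lam = utilityAt V v σ2 W0 B d w p l := by
  rw [fPrimeW, if_neg hp] at h
  rw [utilityAt]
  set L := Real.logb 2 (1 + p l / interfW V v σ2 w p l)
  obtain ⟨hw, hd, hW0, hB, hL⟩ : w l ≠ 0 ∧ d l ≠ 0 ∧ W0 ≠ 0 ∧ B ≠ 0 ∧ L ≠ 0 := by
    refine ⟨?_, ?_, ?_, ?_, ?_⟩ <;> rintro h0 <;> simp [h0] at h <;> exact hp h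
  field_simp at h ⊢
  linarith

lemma utilityAt_le_of_le_smul (hV : ∀ i j, 0 ≤ V i j) (hv : 0 < v l) (hσ2 : 0 < σ2)
    (hW0 : 0 ≤ W0) (hB : 0 ≤ B) (hd : 0 ≤ d l) (hw : 0 ≤ w) (hq : 0 ≤ q) (hr : 0 ≤ r)
    (ht : 1 ≤ t) (h : r ≤ t • q) (hl : r l = t * q l) :
    utilityAt V v σ2 W0 B d w q l ≤ utilityAt V v σ2 W0 B d w r l := by
  have hsinr := sinr_le_of_le_smul hV hv hσ2 hw hr ht h hl
  have : 0 ≤ q l / interfW V v σ2 w q l := div_nonneg (hq l) (interfW_pos hV hv hσ2 hw hq).le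
  unfold utilityAt
  gcongr _ * ?_ / _
  · exact mul_nonneg (mul_nonneg hW0 hB) (hw l)
  · exact Real.logb_le_logb_of_le one_lt_two (by linarith) (by linarith)

lemma utilityAt_lt_of_le_smul (hV : ∀ i j, 0 ≤ V i j) (hv : 0 < v l) (hσ2 : 0 < σ2)
    (hW0 : 0 < W0) (hB : 0 < B) (hd : 0 < d l) (hw : ∀ i, 0 < w i) (hq : ∀ i, 0 < q i)
    (hr : 0 ≤ r) (ht : 1 < t) (h : r ≤ t • q) (hl : r l = t * q l) :
    utilityAt V v σ2 W0 B d w q l < utilityAt V v σ2 W0 B d w r l := by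
  have hw' : 0 ≤ w := fun i => (hw i).le
  have hsinr := sinr_lt_of_le_smul hV hv hσ2 hw' hr (hq l) ht h hl
  have : 0 ≤ q l / interfW V v σ2 w q l :=
    div_nonneg (hq l).le (interfW_pos hV hv hσ2 hw' fun i => (hq i).le).le
  unfold utilityAt
  gcongr _ * ?_ / _
  · exact mul_pos (mul_pos hW0 hB) (hw l)
  · exact Real.logb_lt_logb one_lt_two (by linarith) (by linarith)

end Utility

lemma gTwo_le_smul {K N : ℕ} {aext : Fin (2 * K) → Fin (K + N)} {pmax : Fin (K + N) → ℝ}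
    {W0 t : ℝ} {w q r : Fin (2 * K) → ℝ} (hW0 : 0 ≤ W0) (hpmax : ∀ j, 0 ≤ pmax j)
    (hw : 0 ≤ w) (ht : 0 ≤ t) (h : r ≤ t • q) :
    gTwo aext pmax W0 w r ≤ t * gTwo aext pmax W0 w q := by
  unfold gTwo
  rw [mul_left_comm, Real.mul_iSup_of_nonneg ht]
  gcongr with j
  · exact (Set.finite_range _).bddAbove
  · rw [mul_div_assoc', Finset.mul_sum]
    gcongr with l
    · exact hpmax j
    · split_ifs
      · simpa [mul_left_comm] using mul_le_mul_of_nonneg_left (h l) (hw l)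
      · simp

lemma exists_le_smul_eq {ι : Type*} [Finite ι] [Nonempty ι] {q r : ι → ℝ}
    (hq : ∀ i, 0 < q i) (hr : 0 ≤ r) : ∃ t l, 0 ≤ t ∧ r ≤ t • q ∧ r l = t * q l := by
  obtain ⟨l, hl⟩ := Finite.exists_max fun i : ι => r i / q i
  refine ⟨r l / q l, l, div_nonneg (hr l) (hq l).le, fun i => ?_, ?_⟩
  · simpa [div_le_iff₀ (hq i)] using hl i
  · rw [div_mul_cancel₀ _ (hq l).ne']

theorem power_update_utility_general (K N : ℕ) (hK : 1 ≤ K)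
    (V : Matrix (Fin (2 * K)) (Fin (2 * K)) ℝ) (hV : ∀ i j, 0 ≤ V i j)
    (v : Fin (2 * K) → ℝ) (hv : ∀ i, 0 < v i)
    (σ2 : ℝ) (hσ2 : 0 < σ2) (W0 B : ℝ) (hW0 : 0 < W0) (hB : 0 < B)
    (d : Fin (2 * K) → ℝ) (hd : ∀ i, 0 < d i)
    (aext : Fin (2 * K) → Fin (K + N))
    (pmax : Fin (K + N) → ℝ) (hpmax : ∀ j, 0 < pmax j)
    (p' : Fin (2 * K) → ℝ) (hp' : ∀ i, 0 < p' i)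
    (w' : Fin (2 * K) → ℝ) (hw' : ∀ i, 0 < w' i) (lam' : ℝ)
    (hfixw : ∀ l, w' l = lam' * rateF V v σ2 W0 B d p' w' l)
    (p'' : Fin (2 * K) → ℝ) (hp'' : ∀ i, 0 < p'' i) (lam'' : ℝ)
    (hfixp : ∀ l, p'' l = lam'' * fPrimeW V v σ2 W0 B d w' p'' l)
    (hgp : gTwo aext pmax W0 w' p'' = 1) :
    (gTwo aext pmax W0 w' p' = 1 → lam'' = lam' ∧ p'' = p') ∧
    (gTwo aext pmax W0 w' p' < 1 → lam' < lam'') := by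
  have : Nonempty (Fin (2 * K)) := ⟨⟨0, by omega⟩⟩
  have hw : 0 ≤ w' := fun i => (hw' i).le
  have hp'0 : 0 ≤ p' := fun i => (hp' i).le
  have hp''0 : 0 ≤ p'' := fun i => (hp'' i).le
  have hlam' l : lam' = utilityAt V v σ2 W0 B d w' p' l :=
    eq_utilityAt_of_rateF (hw' l).ne' (hfixw l)
  have hlam'' l : lam'' = utilityAt V v σ2 W0 B d w' p'' l :=
    eq_utilityAt_of_fPrimeW (hp'' l).ne' (hfixp l)
  obtain ⟨t, l₀, ht, hp''_le, hl₀⟩ := exists_le_smul_eq hp' hp''0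
  obtain ⟨s, l₁, hs, hp'_le, hl₁⟩ := exists_le_smul_eq hp'' hp'0
  have cmp_t : (1 ≤ t → lam' ≤ lam'') ∧ (1 < t → lam' < lam'') := by
    rw [hlam' l₀, hlam'' l₀]
    exact ⟨(utilityAt_le_of_le_smul hV (hv l₀) hσ2 hW0.le hB.le (hd l₀).le hw hp'0 hp''0 ·
      hp''_le hl₀), (utilityAt_lt_of_le_smul hV (hv l₀) hσ2 hW0 hB (hd l₀) hw' hp' hp''0 ·
      hp''_le hl₀)⟩
  have cmp_s : (1 ≤ s → lam'' ≤ lam') ∧ (1 < s → lam'' < lam') := by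
    rw [hlam' l₁, hlam'' l₁]
    exact ⟨(utilityAt_le_of_le_smul hV (hv l₁) hσ2 hW0.le hB.le (hd l₁).le hw hp''0 hp'0 ·
      hp'_le hl₁), (utilityAt_lt_of_le_smul hV (hv l₁) hσ2 hW0 hB (hd l₁) hw' hp'' hp'0 ·
      hp'_le hl₁)⟩
  have hgt : 1 ≤ t * gTwo aext pmax W0 w' p' :=
    hgp ▸ gTwo_le_smul hW0.le (fun j => (hpmax j).le) hw ht hp''_le
  have hgs : gTwo aext pmax W0 w' p' ≤ s := by
    simpa [hgp] using gTwo_le_smul (aext := aext) hW0.le (fun j => (hpmax j).le) hw hs hp'_le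
  refine ⟨fun hg => ?_, fun hg => cmp_t.2 (by nlinarith [mul_nonneg ht (sub_nonneg.2 hg.le)])⟩
  rw [hg, mul_one] at hgt
  rw [hg] at hgs
  have ht1 : t = 1 := le_antisymm (not_lt.1 fun h => (cmp_t.2 h).not_ge (cmp_s.1 hgs)) hgt
  have hs1 : s = 1 := le_antisymm (not_lt.1 fun h => (cmp_s.2 h).not_ge (cmp_t.1 hgt)) hgs
  have hp : p'' = p' := le_antisymm (by simpa [ht1] using hp''_le) (by simpa [hs1] using hp'_le)
  exact ⟨by rw [hlam'' l₀, hlam' l₀, hp], hp⟩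

/-- Proposition 3 of the paper: let `w'` be the normalized fixed point
of `f_{p'}` (with utility `λ'`) and `p''` the normalized fixed point of `f'_{w'}`
(with utility `λ''` and `g_{2,w'}(p'') = 1`). Then (i) if `g_{2,p'}(w') = 1` we have
`λ'' = λ'` and `p'' = p'`; (ii) if `g_{2,p'}(w') < 1` we have `λ'' > λ'`. -/
theorem power_update_utility (K N : ℕ) (hK : 1 ≤ K) (hN : 1 ≤ N)
    (V : Matrix (Fin (2 * K)) (Fin (2 * K)) ℝ) (hV : ∀ i j, 0 ≤ V i j)
    (v : Fin (2 * K) → ℝ) (hv : ∀ i, 0 < v i)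
    (σ2 : ℝ) (hσ2 : 0 < σ2) (W0 B : ℝ) (hW0 : 0 < W0) (hB : 0 < B)
    (d : Fin (2 * K) → ℝ) (hd : ∀ i, 0 < d i)
    (asg : Fin (2 * K) → Fin N) (aext : Fin (2 * K) → Fin (K + N))
    (pmax : Fin (K + N) → ℝ) (hpmax : ∀ j, 0 < pmax j)
    (p' : Fin (2 * K) → ℝ) (hp' : ∀ i, 0 < p' i)
    (w' : Fin (2 * K) → ℝ) (hw' : ∀ i, 0 < w' i) (lam' : ℝ)
    (hlam' : lam' = 1 / max (gOne asg (fun l => rateF V v σ2 W0 B d p' w' l))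
      (gTwo aext pmax W0 (fun l => rateF V v σ2 W0 B d p' w' l) p'))
    (hfixw : ∀ l, w' l = lam' * rateF V v σ2 W0 B d p' w' l)
    (hgw : max (gOne asg w') (gTwo aext pmax W0 w' p') = 1)
    (p'' : Fin (2 * K) → ℝ) (hp'' : ∀ i, 0 < p'' i) (lam'' : ℝ)
    (hlam'' : lam'' = 1 / gTwo aext pmax W0 w'
      (fun l => fPrimeW V v σ2 W0 B d w' p'' l))
    (hfixp : ∀ l, p'' l = lam'' * fPrimeW V v σ2 W0 B d w' p'' l)
    (hgp : gTwo aext pmax W0 w' p'' = 1) :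
    (gTwo aext pmax W0 w' p' = 1 → lam'' = lam' ∧ p'' = p') ∧
    (gTwo aext pmax W0 w' p' < 1 → lam' < lam'') :=
  power_update_utility_general K N hK V hV v hv σ2 hσ2 W0 B hW0 hB d hd aext pmax hpmax p' hp' w'
    hw' lam' hfixw p'' hp'' lam'' hfixp hgp
end

section
/- Let f : ℝ₊ᵏ → ℝ₊₊ᵏ be a standard interference function and suppose there exists p̂ ∈ ℝ₊₊ᵏ with f(p̂) ≤ p̂ componentwise. Then: (i) from any initial point p⁽¹⁾ ∈ ℝ₊ᵏ, the iteration p⁽ᵗ⁺¹⁾ = f(p⁽ᵗ⁾) converges to the unique fixed point p** of f; (ii) p** ≤ p componentwise for every p ∈ ℝ₊ᵏ with p ≥ f(p); and hence (iii) for every componentwise nondecreasing function ψ : ℝ₊ᵏ → ℝ₊ (x ≤ y componentwise implies ψ(x) ≤ ψ(y)), p** minimizes ψ over the feasible set {p ∈ ℝ₊ᵏ : p ≥ f(p)}. -/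
/-!
The iterates `f^[t] 0` increase and stay below every feasible point, so they converge to a
limit `p*` lying below every feasible point. Scalability makes `f` continuous at positive points,
so `p*` is a fixed point. If `p` is positive with `f p ≤ p` and `q ≤ f q`, scaling `p` by the
least `α` with `q ≤ α • p` and applying `f` would give `q < α • p` strictly if `α > 1`; hence
`q ≤ p`, and positive fixed points are unique. An arbitrary orbit starting below `α • p*` is
squeezed between the orbits of `0` and of `α • p*`; both converge to fixed points, i.e. to `p*`.
-/

open Filter Topology

structure IsStandardInterference_s18 {ι : Type*} (f : (ι → ℝ) → ι → ℝ) : Prop where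
  pos : ∀ x, 0 ≤ x → ∀ i, 0 < f x i
  mono : ∀ x y, 0 ≤ x → x ≤ y → f x ≤ f y
  scale : ∀ α : ℝ, 1 < α → ∀ x, 0 ≤ x → ∀ i, f (α • x) i < α * f x i

section Positive

variable {ι : Type*} [Finite ι] {p : ι → ℝ}

theorem exists_one_le_le_smul (hp : ∀ i, 0 < p i) (x : ι → ℝ) :
    ∃ α : ℝ, 1 ≤ α ∧ x ≤ α • p := by
  obtain ⟨C, hC⟩ := (Set.finite_range fun i => x i / p i).bddAbove
  refine ⟨max C 1, le_max_right _ _, fun i => ?_⟩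
  exact (div_le_iff₀ (hp i)).1 ((hC ⟨i, rfl⟩).trans (le_max_left _ _))

theorem eventually_inv_smul_le_and_le_smul (hp : ∀ i, 0 < p i) {α : ℝ} (hα : 1 < α) :
    ∀ᶠ x in 𝓝 p, α⁻¹ • p ≤ x ∧ x ≤ α • p := by
  have h : ∀ i, ∀ᶠ x : ι → ℝ in 𝓝 p, x i ∈ Set.Ioo (α⁻¹ * p i) (α * p i) := fun i =>
    (continuous_apply i).continuousAt.eventually <| Ioo_mem_nhds
      ((inv_mul_lt_iff₀ (one_pos.trans hα)).2 (lt_mul_of_one_lt_left (hp i) hα))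
      (lt_mul_of_one_lt_left (hp i) hα)
  filter_upwards [eventually_all.2 h] with x hx
  exact ⟨fun i => (hx i).1.le, fun i => (hx i).2.le⟩

end Positive

namespace IsStandardInterference_s18

variable {ι : Type*} {f : (ι → ℝ) → ι → ℝ}

theorem map_nonneg (hf : IsStandardInterference_s18 f) {x : ι → ℝ} (hx : 0 ≤ x) : 0 ≤ f x :=
  fun i => (hf.pos x hx i).le

theorem iterate_nonneg (hf : IsStandardInterference_s18 f) {x : ι → ℝ} (hx : 0 ≤ x) (t : ℕ) :
    0 ≤ f^[t] x := by
  induction t with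
  | zero => exact hx
  | succ t ih => rw [Function.iterate_succ_apply']; exact hf.map_nonneg ih

theorem iterate_mono (hf : IsStandardInterference_s18 f) {x y : ι → ℝ} (hx : 0 ≤ x) (hxy : x ≤ y)
    (t : ℕ) : f^[t] x ≤ f^[t] y := by
  induction t with
  | zero => exact hxy
  | succ t ih =>
    simp only [Function.iterate_succ_apply']
    exact hf.mono _ _ (hf.iterate_nonneg hx t) ih

theorem iterate_le_of_map_le (hf : IsStandardInterference_s18 f) {x p : ι → ℝ} (hx : 0 ≤ x)
    (hxp : x ≤ p) (hfp : f p ≤ p) (t : ℕ) : f^[t] x ≤ p := by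
  induction t with
  | zero => exact hxp
  | succ t ih =>
    rw [Function.iterate_succ_apply']
    exact (hf.mono _ _ (hf.iterate_nonneg hx t) ih).trans hfp

theorem le_iterate_of_le_map (hf : IsStandardInterference_s18 f) {x p : ι → ℝ} (hp : 0 ≤ p)
    (hpx : p ≤ x) (hpf : p ≤ f p) (t : ℕ) : p ≤ f^[t] x := by
  induction t with
  | zero => exact hpx
  | succ t ih =>
    rw [Function.iterate_succ_apply']
    exact hpf.trans (hf.mono _ _ hp ih)

theorem monotone_iterate_zero (hf : IsStandardInterference_s18 f) :
    Monotone fun t => f^[t] (0 : ι → ℝ) :=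
  monotone_nat_of_le_succ fun t => by
    rw [Function.iterate_succ_apply]
    exact hf.iterate_mono le_rfl (hf.map_nonneg le_rfl) t

theorem antitone_iterate_of_map_le (hf : IsStandardInterference_s18 f) {x : ι → ℝ} (hx : 0 ≤ x)
    (hfx : f x ≤ x) : Antitone fun t => f^[t] x :=
  antitone_nat_of_succ_le fun t => by
    rw [Function.iterate_succ_apply]
    exact hf.iterate_mono (hf.map_nonneg hx) hfx t

theorem map_smul_le (hf : IsStandardInterference_s18 f) {α : ℝ} (hα : 1 ≤ α) {x : ι → ℝ}
    (hx : 0 ≤ x) : f (α • x) ≤ α • f x := by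
  rcases hα.eq_or_lt with rfl | hα
  · simp
  · exact fun i => (hf.scale α hα x hx i).le

theorem inv_mul_lt_map_inv_smul (hf : IsStandardInterference_s18 f) {α : ℝ} (hα : 1 < α)
    {x : ι → ℝ} (hx : 0 ≤ x) (i : ι) : α⁻¹ * f x i < f (α⁻¹ • x) i := by
  have hα₀ : 0 < α := one_pos.trans hα
  have h := hf.scale α hα (α⁻¹ • x) (smul_nonneg (inv_nonneg.2 hα₀.le) hx) i
  rw [smul_inv_smul₀ hα₀.ne'] at h
  rwa [inv_mul_lt_iff₀ hα₀]

/- Near `p`, `x` lies in `[α⁻¹ • p, α • p]`, where monotonicity and scalability pin `f x i`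
strictly between `α⁻¹ * f p i` and `α * f p i`. -/
theorem continuousAt [Finite ι] (hf : IsStandardInterference_s18 f) {p : ι → ℝ}
    (hp : ∀ i, 0 < p i) : ContinuousAt f p := by
  have hp₀ : 0 ≤ p := fun i => (hp i).le
  refine tendsto_pi_nhds.2 fun i => tendsto_order.2 ⟨fun a ha => ?_, fun a ha => ?_⟩
  · set b := max a (f p i / 2)
    have hb : 0 < b := lt_max_of_lt_right (half_pos (hf.pos p hp₀ i))
    have hα : 1 < f p i / b := (one_lt_div hb).2 (max_lt ha (half_lt_self (hf.pos p hp₀ i)))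
    filter_upwards [eventually_inv_smul_le_and_le_smul hp hα] with x hx
    calc a ≤ (f p i / b)⁻¹ * f p i := by
          rw [inv_div, div_mul_cancel₀ _ (hf.pos p hp₀ i).ne']
          exact le_max_left _ _
      _ < f ((f p i / b)⁻¹ • p) i := hf.inv_mul_lt_map_inv_smul hα hp₀ i
      _ ≤ f x i := hf.mono _ _ (smul_nonneg (by positivity) hp₀) hx.1 i
  · have hα : 1 < a / f p i := (one_lt_div (hf.pos p hp₀ i)).2 ha
    filter_upwards [eventually_inv_smul_le_and_le_smul hp hα] with x hx
    have hx₀ : 0 ≤ x := (smul_nonneg (by positivity) hp₀).trans hx.1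
    calc f x i ≤ f ((a / f p i) • p) i := hf.mono _ _ hx₀ hx.2 i
      _ < a / f p i * f p i := hf.scale _ hα p hp₀ i
      _ = a := div_mul_cancel₀ _ (hf.pos p hp₀ i).ne'

theorem le_of_le_map_of_map_le [Finite ι] (hf : IsStandardInterference_s18 f) {p q : ι → ℝ}
    (hq : 0 ≤ q) (hqf : q ≤ f q) (hp : ∀ i, 0 < p i) (hpf : f p ≤ p) : q ≤ p := by
  cases isEmpty_or_nonempty ι
  · exact fun i => isEmptyElim i
  obtain ⟨i₀, hi₀⟩ := Finite.exists_max fun i => q i / p i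
  set α := q i₀ / p i₀
  have hqα : q ≤ α • p := fun i => (div_le_iff₀ (hp i)).1 (hi₀ i)
  rcases le_or_gt α 1 with hα | hα
  · exact fun i => (hqα i).trans (mul_le_of_le_one_left (hp i).le hα)
  · refine absurd ?_ (lt_irrefl (q i₀))
    calc q i₀ ≤ f q i₀ := hqf i₀
      _ ≤ f (α • p) i₀ := hf.mono _ _ hq hqα i₀
      _ < α * f p i₀ := hf.scale α hα p (fun i => (hp i).le) i₀
      _ ≤ α * p i₀ := by gcongr; exact hpf i₀
      _ = q i₀ := div_mul_cancel₀ _ (hp i₀).ne'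

theorem eq_of_isFixedPt [Finite ι] (hf : IsStandardInterference_s18 f) {p q : ι → ℝ}
    (hp : ∀ i, 0 < p i) (hfp : f p = p) (hq : ∀ i, 0 < q i) (hfq : f q = q) : q = p :=
  le_antisymm (hf.le_of_le_map_of_map_le (fun i => (hq i).le) hfq.ge hp hfp.le)
    (hf.le_of_le_map_of_map_le (fun i => (hp i).le) hfp.ge hq hfq.le)

theorem eq_of_tendsto_iterate [Finite ι] (hf : IsStandardInterference_s18 f) {p q x : ι → ℝ}
    (hp : ∀ i, 0 < p i) (hfp : f p = p) (hq : ∀ i, 0 < q i)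
    (hlim : Tendsto (fun t => f^[t] x) atTop (𝓝 q)) : q = p :=
  hf.eq_of_isFixedPt hp hfp hq (isFixedPt_of_tendsto_iterate hlim (hf.continuousAt hq))

theorem exists_tendsto_iterate_zero (hf : IsStandardInterference_s18 f) {p : ι → ℝ} (hp : 0 ≤ p)
    (hfp : f p ≤ p) : ∃ q, (∀ i, 0 < q i) ∧ Tendsto (fun t => f^[t] 0) atTop (𝓝 q) := by
  have hbdd : BddAbove (Set.range fun t => f^[t] (0 : ι → ℝ)) :=
    ⟨p, Set.forall_mem_range.2 (hf.iterate_le_of_map_le le_rfl hp hfp)⟩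
  have hlim := tendsto_atTop_ciSup hf.monotone_iterate_zero hbdd
  have hle := hf.monotone_iterate_zero.ge_of_tendsto hlim 1
  exact ⟨_, fun i => (hf.pos 0 le_rfl i).trans_le (hle i), hlim⟩

theorem exists_tendsto_iterate_of_map_le (hf : IsStandardInterference_s18 f) {p x : ι → ℝ}
    (hp : ∀ i, 0 < p i) (hpf : p ≤ f p) (hpx : p ≤ x) (hfx : f x ≤ x) :
    ∃ q, (∀ i, 0 < q i) ∧ Tendsto (fun t => f^[t] x) atTop (𝓝 q) := by
  have hp₀ : 0 ≤ p := fun i => (hp i).le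
  have hanti := hf.antitone_iterate_of_map_le (hp₀.trans hpx) hfx
  have hlow := hf.le_iterate_of_le_map hp₀ hpx hpf
  have hlim := tendsto_atTop_ciInf hanti ⟨p, Set.forall_mem_range.2 hlow⟩
  exact ⟨_, fun i => (hp i).trans_le (le_ciInf hlow i), hlim⟩

theorem tendsto_iterate [Finite ι] (hf : IsStandardInterference_s18 f) {p x : ι → ℝ}
    (hp : ∀ i, 0 < p i) (hfp : f p = p) (hx : 0 ≤ x) :
    Tendsto (fun t => f^[t] x) atTop (𝓝 p) := by
  have hp₀ : 0 ≤ p := fun i => (hp i).le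
  obtain ⟨α, hα, hxα⟩ := exists_one_le_le_smul hp x
  have hpα : p ≤ α • p := fun i => le_mul_of_one_le_left (hp₀ i) hα
  have hfα : f (α • p) ≤ α • p := (hf.map_smul_le hα hp₀).trans_eq (by rw [hfp])
  obtain ⟨q, hq, hlow⟩ := hf.exists_tendsto_iterate_zero hp₀ hfp.le
  obtain ⟨r, hr, hup⟩ := hf.exists_tendsto_iterate_of_map_le hp hfp.ge hpα hfα
  rw [hf.eq_of_tendsto_iterate hp hfp hq hlow] at hlow
  rw [hf.eq_of_tendsto_iterate hp hfp hr hup] at hup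
  refine tendsto_pi_nhds.2 fun i => tendsto_of_tendsto_of_tendsto_of_le_of_le
    (tendsto_pi_nhds.1 hlow i) (tendsto_pi_nhds.1 hup i) (fun t => ?_) (fun t => ?_)
  · exact hf.iterate_mono le_rfl hx t i
  · exact hf.iterate_mono hx hxα t i

end IsStandardInterference_s18

/-- Proposition 4 / Yates' power-minimization result: if a standard
interference function `f` admits a feasible point (`f p̂ ≤ p̂` for some positive `p̂`),
then the iteration `p⁽ᵗ⁺¹⁾ = f(p⁽ᵗ⁾)` converges from every nonnegative initial point
to the unique fixed point `p**`, which is componentwise minimal in the feasible set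
`{p ≥ 0 : f p ≤ p}` and hence minimizes every componentwise nondecreasing `ψ` over
that set. -/
theorem sif_power_minimization (k : ℕ) (f : (Fin k → ℝ) → (Fin k → ℝ))
    (hpos : ∀ x : Fin k → ℝ, (∀ i, 0 ≤ x i) → ∀ i, 0 < f x i)
    (hmono : ∀ x y : Fin k → ℝ, (∀ i, 0 ≤ x i) → x ≤ y → f x ≤ f y)
    (hscale : ∀ α : ℝ, 1 < α → ∀ x : Fin k → ℝ, (∀ i, 0 ≤ x i) →
      ∀ i, f (α • x) i < α * f x i)
    (phat : Fin k → ℝ) (hphat : ∀ i, 0 < phat i) (hfeas : f phat ≤ phat) :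
    ∃ pstar : Fin k → ℝ, (∀ i, 0 < pstar i) ∧ pstar = f pstar ∧
      (∀ q : Fin k → ℝ, (∀ i, 0 < q i) → q = f q → q = pstar) ∧
      (∀ p1 : Fin k → ℝ, (∀ i, 0 ≤ p1 i) →
        Filter.Tendsto (fun t => f^[t] p1) Filter.atTop (nhds pstar)) ∧
      (∀ p : Fin k → ℝ, (∀ i, 0 ≤ p i) → f p ≤ p → pstar ≤ p) ∧
      (∀ ψ : (Fin k → ℝ) → ℝ,
        (∀ x y : Fin k → ℝ, (∀ i, 0 ≤ x i) → x ≤ y → ψ x ≤ ψ y) →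
        ∀ p : Fin k → ℝ, (∀ i, 0 ≤ p i) → f p ≤ p → ψ pstar ≤ ψ p) := by
  have hf : IsStandardInterference_s18 f := ⟨hpos, hmono, hscale⟩
  obtain ⟨pstar, hpstar, hlim⟩ := hf.exists_tendsto_iterate_zero (fun i => (hphat i).le) hfeas
  have hfix : f pstar = pstar := isFixedPt_of_tendsto_iterate hlim (hf.continuousAt hpstar)
  have hmin : ∀ p : Fin k → ℝ, 0 ≤ p → f p ≤ p → pstar ≤ p := fun p hp hfp =>
    le_of_tendsto' hlim (hf.iterate_le_of_map_le le_rfl hp hfp)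
  refine ⟨pstar, hpstar, hfix.symm, fun q hq hfq => hf.eq_of_isFixedPt hpstar hfix hq hfq.symm,
    fun p1 hp1 => hf.tendsto_iterate hpstar hfix hp1, hmin, ?_⟩
  exact fun ψ hψ p hp hfp => hψ pstar p (fun i => (hpstar i).le) (hmin p hp hfp)
end
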